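/- Sharp bound for the Oleinik-type quotient Φ (equation (6.18) in the proof of Proposition 6.1): Let f, θ be as in the context. For real x, t with 0 < x < √2·t, set u_{x,t} := (f')⁻¹((2x/t)^{1/3}). Then u_{x,t} > θ, t·f'(u_{x,t}) > x, 3·(t/2)^{2/3} − x^{2/3} > 0, and for every u ≥ θ the denominator f'(u)²·(t·f'(u) − x) + x is strictly positive and the quantity Φ(x,t,u) := f'(u)² / ( f'(u)²·(t·f'(u) − x) + x ) satisfies Φ(x,t,u) ≤ Φ(x,t,u_{x,t}) = 1 / ( x^{1/3}·( 3·(t/2)^{2/3} − x^{2/3} ) ) < x^{−1/3}·(2/t)^{2/3}. -/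

import Mathlib

/-!
Substituting `x = s³` and `t = 2c³` removes every fractional power: the maximiser
`(2x/t)^{1/3}` becomes `s/c`, the bound `x^{-1/3}(2/t)^{2/3}` becomes `1/(s c²)`, and
`x < √2 t` becomes `s² < 2c²`. Writing `q = f'(v)`, the denominator `q²(tq - x) + x` of `Φ`
then splits as `s(3c² - s²) q² + (c q - s)² (2 c q + s)`, so `Φ ≤ 1 / (s(3c² - s²))` as soon as
`q ≥ 0`, which holds for `v ≥ θ` since `f'` is increasing, with equality at `q = s/c`.
-/

noncomputable section

open Real

def oleinikDen (x t q : ℝ) : ℝ := q ^ 2 * (t * q - x) + x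

def oleinikQuotient (x t q : ℝ) : ℝ := q ^ 2 / oleinikDen x t q

section CubeParameters

variable {s c q : ℝ}

lemma oleinikDen_cube_eq (s c q : ℝ) :
    oleinikDen (s ^ 3) (2 * c ^ 3) q =
      s * (3 * c ^ 2 - s ^ 2) * q ^ 2 + (c * q - s) ^ 2 * (2 * c * q + s) := by
  unfold oleinikDen
  ring

lemma oleinikDen_cube_pos (hs : 0 < s) (hc : 0 ≤ c) (hsc : s ^ 2 < 3 * c ^ 2) (hq : 0 ≤ q) :
    0 < oleinikDen (s ^ 3) (2 * c ^ 3) q := by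
  rw [oleinikDen_cube_eq]
  rcases hq.eq_or_lt with rfl | hq
  · norm_num
    positivity
  · have := sub_pos.2 hsc
    have : 0 < s * (3 * c ^ 2 - s ^ 2) * q ^ 2 := by positivity
    have : 0 ≤ (c * q - s) ^ 2 * (2 * c * q + s) := by positivity
    linarith

lemma oleinikQuotient_cube_le (hs : 0 < s) (hc : 0 ≤ c) (hsc : s ^ 2 < 3 * c ^ 2)
    (hq : 0 ≤ q) : oleinikQuotient (s ^ 3) (2 * c ^ 3) q ≤ 1 / (s * (3 * c ^ 2 - s ^ 2)) := by
  have hK : 0 < s * (3 * c ^ 2 - s ^ 2) := mul_pos hs (sub_pos.2 hsc)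
  rw [oleinikQuotient, div_le_div_iff₀ (oleinikDen_cube_pos hs hc hsc hq) hK, oleinikDen_cube_eq]
  have : 0 ≤ (c * q - s) ^ 2 * (2 * c * q + s) := by positivity
  linarith

lemma oleinikQuotient_cube_div (hs : s ≠ 0) (hc : c ≠ 0) :
    oleinikQuotient (s ^ 3) (2 * c ^ 3) (s / c) = 1 / (s * (3 * c ^ 2 - s ^ 2)) := by
  rw [oleinikQuotient, oleinikDen_cube_eq, mul_div_cancel₀ s hc, sub_self, zero_pow two_ne_zero, zero_mul, add_zero, div_mul_cancel_right₀ (by positivity), one_div]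

lemma one_div_mul_three_sq_sub_lt (hs : 0 < s) (hsc : s ^ 2 < 2 * c ^ 2) :
    1 / (s * (3 * c ^ 2 - s ^ 2)) < s⁻¹ * c⁻¹ ^ 2 := by
  have hc : 0 < c ^ 2 := by nlinarith
  rw [one_div, inv_pow, ← mul_inv]
  exact inv_strictAnti₀ (by positivity) (by nlinarith)

lemma sq_lt_two_mul_sq_of_cube_lt (hs : 0 ≤ s) (h : s ^ 3 < √2 * (2 * c ^ 3)) :
    s ^ 2 < 2 * c ^ 2 := by
  have hs2 : √2 ^ 2 = 2 := sq_sqrt zero_le_two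
  have hlt : s < √2 * c := by
    refine (Odd.strictMono_pow (by decide : Odd 3)).lt_iff_lt.1 ?_
    calc s ^ 3 < √2 * (2 * c ^ 3) := h
      _ = (√2 * c) ^ 3 := by rw [mul_pow, show √2 ^ 3 = √2 * 2 by rw [pow_succ, hs2]; ring]; ring
  calc s ^ 2 < (√2 * c) ^ 2 := pow_lt_pow_left₀ hlt hs two_ne_zero
    _ = 2 * c ^ 2 := by rw [mul_pow, hs2]

end CubeParameters

lemma pow_three_rpow_div_three {y : ℝ} (hy : 0 ≤ y) (r : ℝ) : (y ^ 3) ^ (r / 3) = y ^ r := by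
  rw [← rpow_natCast, ← rpow_mul hy, Nat.cast_ofNat, mul_div_cancel₀ _ three_ne_zero]

lemma rpow_one_div_three_pow_three {y : ℝ} (hy : 0 ≤ y) : (y ^ ((1 : ℝ) / 3)) ^ 3 = y := by
  rw [← rpow_natCast, ← rpow_mul hy]
  norm_num

theorem phi_quotient_sharp_bound_general
    (f : ℝ → ℝ) (a : ℝ) (ha : 0 < a)
    (hf2 : ∀ u : ℝ, a ≤ deriv (deriv f) u)
    (θ : ℝ) (hθ : deriv f θ = 0)
    (finv : ℝ → ℝ)
    (hfinv2 : ∀ p : ℝ, deriv f (finv p) = p)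
    (x t : ℝ) (hx : 0 < x) (hxt : x < Real.sqrt 2 * t)
    (u : ℝ) (hu : u = finv ((2 * x / t) ^ ((1:ℝ)/3))) :
    θ < u ∧
    x < t * deriv f u ∧
    0 < 3 * (t / 2) ^ ((2:ℝ)/3) - x ^ ((2:ℝ)/3) ∧
    (∀ v : ℝ, θ ≤ v → 0 < (deriv f v) ^ 2 * (t * deriv f v - x) + x) ∧
    (∀ v : ℝ, θ ≤ v →
      (deriv f v) ^ 2 / ((deriv f v) ^ 2 * (t * deriv f v - x) + x) ≤
        (deriv f u) ^ 2 / ((deriv f u) ^ 2 * (t * deriv f u - x) + x)) ∧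
    (deriv f u) ^ 2 / ((deriv f u) ^ 2 * (t * deriv f u - x) + x) =
      1 / (x ^ ((1:ℝ)/3) * (3 * (t / 2) ^ ((2:ℝ)/3) - x ^ ((2:ℝ)/3))) ∧
    (deriv f u) ^ 2 / ((deriv f u) ^ 2 * (t * deriv f u - x) + x) <
      x ^ (-(1:ℝ)/3) * (2 / t) ^ ((2:ℝ)/3) := by
  have ht : 0 < t := pos_of_mul_pos_right (hx.trans hxt) (sqrt_nonneg 2)
  obtain ⟨s, c, hs, hc, rfl, rfl⟩ : ∃ s c : ℝ, 0 < s ∧ 0 < c ∧ x = s ^ 3 ∧ t = 2 * c ^ 3 :=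
    ⟨_, _, rpow_pos_of_pos hx (1 / 3), rpow_pos_of_pos (half_pos ht) (1 / 3),
      (rpow_one_div_three_pow_three hx.le).symm,
      by rw [rpow_one_div_three_pow_three (half_pos ht).le]; ring⟩
  have hsc : s ^ 2 < 2 * c ^ 2 := sq_lt_two_mul_sq_of_cube_lt hs.le hxt
  have hmono : StrictMono (deriv f) := strictMono_of_deriv_pos fun v => ha.trans_le (hf2 v)
  have hdu : deriv f u = s / c := by
    rw [hu, hfinv2, show 2 * s ^ 3 / (2 * c ^ 3) = (s / c) ^ 3 by field_simp,
      pow_three_rpow_div_three (div_pos hs hc).le, rpow_one]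
  have hnonneg : ∀ v, θ ≤ v → 0 ≤ deriv f v := fun v hv => hθ ▸ hmono.monotone hv
  have hmax : oleinikQuotient (s ^ 3) (2 * c ^ 3) (deriv f u) = 1 / (s * (3 * c ^ 2 - s ^ 2)) := by
    rw [hdu, oleinikQuotient_cube_div hs.ne' hc.ne']
  have hsc3 : s ^ 2 < 3 * c ^ 2 := by linarith [sq_nonneg c]
  rw [show 2 * c ^ 3 / 2 = c ^ 3 by ring, show 2 / (2 * c ^ 3) = c⁻¹ ^ 3 by field_simp]
  simp only [pow_three_rpow_div_three hs.le, pow_three_rpow_div_three hc.le,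
    pow_three_rpow_div_three (inv_pos.2 hc).le, rpow_one, rpow_two, rpow_neg_one]
  refine ⟨hmono.lt_iff_lt.1 (by rw [hθ, hdu]; positivity), ?_, sub_pos.2 hsc3,
    fun v hv => oleinikDen_cube_pos hs hc.le hsc3 (hnonneg v hv),
    fun v hv => (oleinikQuotient_cube_le hs hc.le hsc3 (hnonneg v hv)).trans_eq hmax.symm,
    hmax, hmax.trans_lt (one_div_mul_three_sq_sub_lt hs hsc)⟩
  rw [hdu, show 2 * c ^ 3 * (s / c) = 2 * c ^ 2 * s by field_simp]
  nlinarith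

/-- **Equation (6.18) in the proof of Proposition 6.1**: sharp bound for the
Oleinik-type quotient `Φ(x,t,u) = f'(u)² / (f'(u)²(t f'(u) - x) + x)`. -/
theorem phi_quotient_sharp_bound
    (f : ℝ → ℝ) (a : ℝ) (ha : 0 < a) (hf : ContDiff ℝ 2 f)
    (hf2 : ∀ u : ℝ, a ≤ deriv (deriv f) u)
    (θ : ℝ) (hθ : deriv f θ = 0)
    (finv : ℝ → ℝ) (hfinv1 : ∀ u : ℝ, finv (deriv f u) = u)
    (hfinv2 : ∀ p : ℝ, deriv f (finv p) = p)
    (x t : ℝ) (hx : 0 < x) (hxt : x < Real.sqrt 2 * t)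
    (u : ℝ) (hu : u = finv ((2 * x / t) ^ ((1:ℝ)/3))) :
    θ < u ∧
    x < t * deriv f u ∧
    0 < 3 * (t / 2) ^ ((2:ℝ)/3) - x ^ ((2:ℝ)/3) ∧
    (∀ v : ℝ, θ ≤ v → 0 < (deriv f v) ^ 2 * (t * deriv f v - x) + x) ∧
    (∀ v : ℝ, θ ≤ v →
      (deriv f v) ^ 2 / ((deriv f v) ^ 2 * (t * deriv f v - x) + x) ≤
        (deriv f u) ^ 2 / ((deriv f u) ^ 2 * (t * deriv f u - x) + x)) ∧
    (deriv f u) ^ 2 / ((deriv f u) ^ 2 * (t * deriv f u - x) + x) =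
      1 / (x ^ ((1:ℝ)/3) * (3 * (t / 2) ^ ((2:ℝ)/3) - x ^ ((2:ℝ)/3))) ∧
    (deriv f u) ^ 2 / ((deriv f u) ^ 2 * (t * deriv f u - x) + x) <
      x ^ (-(1:ℝ)/3) * (2 / t) ^ ((2:ℝ)/3) :=
  phi_quotient_sharp_bound_general f a ha hf2 θ hθ finv hfinv2 x t hx hxt u hu
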